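/- arXiv:0905.3816 — 2 statements merged into one kernel-verified Lean document; each statement's English description precedes it below -/
import Mathlib

section
/- For all integers n ≥ |d|, ∑_{k=0}^{n-1} q^k [2k choose k+d]_q = ∑_{k=0}^{n-|d|} q^{(2(n-k)² - (n-k)·χ(n-|d|-k) - 2d² - 1)/3} · χ(n-|d|-k) · [2n choose k]_q, where χ(m) denotes the Legendre symbol (m/3). -/
open Polynomial Finset

/-- The Gaussian (q-)binomial coefficient as a polynomial in `ℤ[q]`
(via the standard Pascal recursion `[n+1,k+1] = [n,k] + q^(k+1)·[n,k+1]`). -/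
noncomputable def gbinom : ℕ → ℕ → Polynomial ℤ
  | _, 0 => 1
  | 0, _ + 1 => 0
  | n + 1, k + 1 => gbinom n k + Polynomial.X ^ (k + 1) * gbinom n (k + 1)

/-- Gaussian binomial with (possibly negative) integer lower index. -/
noncomputable def gbinomZ (m : ℕ) (j : ℤ) : Polynomial ℤ :=
  if 0 ≤ j then gbinom m j.toNat else 0

/-- The Legendre symbol mod 3. -/
def leg3 (m : ℤ) : ℤ := if m % 3 = 0 then 0 else if m % 3 = 1 then 1 else -1

lemma gbinom_zero (n : ℕ) : gbinom n 0 = 1 := by cases n <;> rfl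

lemma gbinom_zs (k : ℕ) : gbinom 0 (k+1) = 0 := rfl

lemma gbinom_ss (n k : ℕ) :
    gbinom (n+1) (k+1) = gbinom n k + X ^ (k + 1) * gbinom n (k + 1) := rfl

lemma gbinom_eq_zero : ∀ {n k : ℕ}, n < k → gbinom n k = 0 := by
  intro n
  induction n with
  | zero => intro k h; match k, h with | k+1, _ => rfl
  | succ n ih =>
    intro k h
    match k, h with
    | k+1, h =>
      rw [gbinom_ss, ih (by omega), ih (by omega)]
      ring

lemma gbinom_self : ∀ n : ℕ, gbinom n n = 1 := by
  intro n
  induction n with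
  | zero => rfl
  | succ n ih => rw [gbinom_ss, ih, gbinom_eq_zero (by omega)]; ring

lemma gbinom_ratio : ∀ (n k : ℕ),
    (1 - X ^ (k+1)) * gbinom n (k+1) = (1 - X ^ (n - k)) * gbinom n k := by
  intro n
  induction n with
  | zero =>
    intro k
    rw [gbinom_zs]
    cases k with
    | zero => simp [gbinom_zero]
    | succ k => rw [gbinom_zs]; ring
  | succ n ih =>
    intro k
    cases k with
    | zero =>
      rw [gbinom_ss, gbinom_zero, gbinom_zero, Nat.sub_zero]
      have h := ih 0
      rw [gbinom_zero, Nat.sub_zero] at h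
      calc (1 - X^(0+1)) * (1 + X^(0+1) * gbinom n (0+1))
          = (1 - X^1) + X * ((1 - X^(0+1)) * gbinom n (0+1)) := by ring
        _ = (1 - X^1) + X * ((1 - X^n) * 1) := by rw [h]
        _ = (1 - X^(n+1)) * 1 := by ring
    | succ k =>
      rw [show n+1-(k+1) = n-k by omega, gbinom_ss, gbinom_ss]
      rcases le_or_gt (k+1) n with h | h
      · have e1 : (X:Polynomial ℤ)^(k+1+1) * X^(n-(k+1)) = X^(n+1) := by
          rw [← pow_add]; congr 1; omega
        have e2 : (X:Polynomial ℤ)^(k+1) * X^(n-k) = X^(n+1) := by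
          rw [← pow_add]; congr 1; omega
        linear_combination (X:Polynomial ℤ)^(k+1+1) * ih (k+1) + ih k + gbinom n (k+1) * (e2 - e1)
      · rw [gbinom_eq_zero (show n < k+1+1 by omega), gbinom_eq_zero (show n < k+1 by omega),
          show n - k = 0 by omega]
        ring

lemma gbinom_one_step (n : ℕ) : gbinom (n+1) 1 = X^n + gbinom n 1 := by
  induction n with
  | zero => rw [gbinom_ss, gbinom_zero, gbinom_zs]; ring
  | succ n ih =>
    have H1 := gbinom_ss (n+1) 0
    have H2 := gbinom_ss n 0
    rw [gbinom_zero] at H1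
    rw [gbinom_zero] at H2
    linear_combination H1 + X * ih - H2

lemma gbinom_dual : ∀ (n k : ℕ), k ≤ n →
    gbinom (n+1) (k+1) = X^(n-k) * gbinom n k + gbinom n (k+1) := by
  intro n
  induction n with
  | zero =>
    intro k hk
    interval_cases k
    rw [gbinom_ss, gbinom_zero, gbinom_zs]
    simp
  | succ n ih =>
    intro k hk
    cases k with
    | zero =>
      rw [Nat.sub_zero, gbinom_zero, gbinom_one_step, gbinom_one_step]
      ring
    | succ k =>
      rcases Nat.lt_or_ge (k+1) (n+1) with h | h
      · have H1 := gbinom_ss (n+1) (k+1)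
        have H2 := ih k (by omega)
        have H3 := ih (k+1) (by omega)
        have HA := gbinom_ss n k
        have HB := gbinom_ss n (k+1)
        have e : (X:Polynomial ℤ)^(k+1+1) * X^(n-(k+1)) = X^(n-k) * X^(k+1) := by
          rw [← pow_add, ← pow_add]; congr 1; omega
        rw [show n+1-(k+1) = n-k by omega]
        linear_combination H1 + H2 + (X:Polynomial ℤ)^(k+1+1)*H3 - (X:Polynomial ℤ)^(n-k)*HA - HB
          + gbinom n (k+1) * e
      · have hk1 : k = n := by omega
        subst hk1
        rw [gbinom_self, gbinom_self, gbinom_eq_zero (show k+1 < k+1+1 by omega), Nat.sub_self]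
        ring

lemma gbinom_symm : ∀ (n k : ℕ), k ≤ n → gbinom n k = gbinom n (n - k) := by
  intro n
  induction n with
  | zero => intro k hk; interval_cases k; rfl
  | succ n ih =>
    intro k hk
    cases k with
    | zero => rw [gbinom_zero, Nat.sub_zero, gbinom_self]
    | succ k =>
      rcases Nat.lt_or_ge (k+1) (n+1) with h | h
      · have hnk : n + 1 - (k+1) = (n - (k+1)) + 1 := by omega
        rw [gbinom_ss, hnk, gbinom_dual n (n-(k+1)) (by omega),
          show n - (n-(k+1)) = k+1 by omega,
          show (n - (k+1)) + 1 = n - k by omega,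
          ← ih k (by omega), ← ih (k+1) (by omega)]
        ring
      · have hk1 : k = n := by omega
        subst hk1
        rw [Nat.sub_self, gbinom_self, gbinom_zero]

lemma pascal_sum (c : ℕ → Polynomial ℤ) (N P : ℕ) (hc : c (P+1) = 0) :
    ∑ k ∈ Finset.range (P+1), c k * gbinom (N+1) k =
      ∑ k ∈ Finset.range (P+1), (c k * X^k + c (k+1)) * gbinom N k := by
  rw [Finset.sum_range_succ' (fun k => c k * gbinom (N+1) k) P]
  have h1 : ∀ k, c (k+1) * gbinom (N+1) (k+1) =
      c (k+1) * gbinom N k + c (k+1) * X^(k+1) * gbinom N (k+1) := by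
    intro k; rw [gbinom_ss]; ring
  rw [Finset.sum_congr rfl (fun k _ => h1 k), Finset.sum_add_distrib]
  have h2 : ∑ k ∈ Finset.range P, c (k+1) * X^(k+1) * gbinom N (k+1) =
      ∑ k ∈ Finset.range (P+1), c k * X^k * gbinom N k - c 0 * X^0 * gbinom N 0 := by
    rw [Finset.sum_range_succ' (fun k => c k * X^k * gbinom N k) P]
    ring
  rw [h2]
  have h3 : ∑ k ∈ Finset.range (P+1), (c k * X^k + c (k+1)) * gbinom N k =
      ∑ k ∈ Finset.range (P+1), c k * X^k * gbinom N k
        + ∑ k ∈ Finset.range (P+1), c (k+1) * gbinom N k := by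
    rw [← Finset.sum_add_distrib]
    exact Finset.sum_congr rfl (fun k _ => by ring)
  rw [h3, Finset.sum_range_succ (fun k => c (k+1) * gbinom N k) P, hc]
  rw [gbinom_zero (N+1), gbinom_zero N]
  ring

def pE (a i : ℕ) : ℕ := 6*i^2 + 3*i + a*(4*i+1)
def rE (a i : ℕ) : ℕ := 6*i^2 + 9*i + 3 + a*(4*i+3)
def gE (n a i : ℕ) : ℕ := n + 6*i^2 + 4*a*i

noncomputable def cj (a j : ℕ) : Polynomial ℤ :=
  if j % 3 = 1 then X^(pE a (j/3)) else if j % 3 = 2 then -X^(rE a (j/3)) else 0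

noncomputable def gj (n a j : ℕ) : Polynomial ℤ :=
  if j % 3 = 1 then -X^(gE n a (j/3))
  else if j % 3 = 2 then -X^(pE a (j/3))
  else if j = 0 then 0 else X^(rE a (j/3 - 1))

noncomputable def cf (n a k : ℕ) : Polynomial ℤ := if k ≤ n - a then cj a (n - a - k) else 0
noncomputable def gf (n a k : ℕ) : Polynomial ℤ := if k ≤ n - a then gj n a (n - a - k) else 0

noncomputable def hf (n a : ℕ) : ℕ → Polynomial ℤ
  | 0 => 0
  | (k+1) => gf n a k * (1 - X^(k+1))

lemma cf_eq (n a k : ℕ) (h : k ≤ n - a) : cf n a k = cj a (n - a - k) := if_pos h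
lemma cf_zero (n a k : ℕ) (h : ¬ k ≤ n - a) : cf n a k = 0 := if_neg h
lemma gf_eq (n a k : ℕ) (h : k ≤ n - a) : gf n a k = gj n a (n - a - k) := if_pos h
lemma gf_zero (n a k : ℕ) (h : ¬ k ≤ n - a) : gf n a k = 0 := if_neg h

lemma cj3_0 (a i : ℕ) : cj a (3*i) = 0 := by
  have h : (3*i) % 3 = 0 := by omega
  simp [cj, h]

lemma cj3_1 (a i : ℕ) : cj a (3*i+1) = X^(pE a i) := by
  have h : (3*i+1) % 3 = 1 := by omega
  have h2 : (3*i+1) / 3 = i := by omega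
  simp [cj, h, h2]

lemma cj3_2 (a i : ℕ) : cj a (3*i+2) = -X^(rE a i) := by
  have h : (3*i+2) % 3 = 2 := by omega
  have h2 : (3*i+2) / 3 = i := by omega
  simp [cj, h, h2]

lemma gj_zero (n a : ℕ) : gj n a 0 = 0 := by simp [gj]

lemma gj3_1 (n a i : ℕ) : gj n a (3*i+1) = -X^(gE n a i) := by
  have h : (3*i+1) % 3 = 1 := by omega
  have h2 : (3*i+1) / 3 = i := by omega
  simp [gj, h, h2]

lemma gj3_2 (n a i : ℕ) : gj n a (3*i+2) = -X^(pE a i) := by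
  have h : (3*i+2) % 3 = 2 := by omega
  have h2 : (3*i+2) / 3 = i := by omega
  simp [gj, h, h2]

lemma gj3_3 (n a i : ℕ) : gj n a (3*i+3) = X^(rE a i) := by
  have h : (3*i+3) % 3 = 0 := by omega
  have h2 : (3*i+3) / 3 - 1 = i := by omega
  simp [gj, h, h2]

lemma hf_zero (n a : ℕ) : hf n a 0 = 0 := rfl
lemma hf_succ (n a k : ℕ) : hf n a (k+1) = gf n a k * (1 - X^(k+1)) := rfl

lemma hf_eq (n a k : ℕ) (h : k ≤ n - a + 1) :
    hf n a k = gj n a (n - a + 1 - k) * (1 - X^k) := by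
  cases k with
  | zero => rw [hf_zero]; simp
  | succ k' =>
    rw [hf_succ, gf_eq n a k' (by omega), show n-a-k' = n-a+1-(k'+1) by omega]

lemma key_term (n a k : ℕ) (ha : a ≤ n) :
    (cf (n+1) a k * X^k + cf (n+1) a (k+1)) * X^k
      + (cf (n+1) a (k+1) * X^(k+1) + cf (n+1) a (k+2))
      + gf n a k * (1 - X^(2*n - k))
    = cf n a k + (if k = n - a then X^n else 0) + hf n a k := by
  have hna1 : n + 1 - a = n - a + 1 := by omega
  rcases Nat.lt_or_ge (n - a) k with hB | hB
  · -- k ≥ n - a + 1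
    rcases Nat.eq_or_lt_of_le hB with hA | hA
    · -- k = n - a + 1
      have hk : k = n - a + 1 := by omega
      rw [cf_eq (n+1) a k (by omega), show n+1-a-k = 3*0 by omega, cj3_0,
        cf_zero (n+1) a (k+1) (by omega), cf_zero (n+1) a (k+2) (by omega),
        gf_zero n a k (by omega), cf_zero n a k (by omega),
        if_neg (show ¬ k = n - a by omega),
        hf_eq n a k (by omega), show n-a+1-k = 0 by omega, gj_zero]
      ring
    · -- k > n - a + 1
      rw [cf_zero (n+1) a k (by omega), cf_zero (n+1) a (k+1) (by omega),
        cf_zero (n+1) a (k+2) (by omega),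
        gf_zero n a k (by omega), cf_zero n a k (by omega),
        if_neg (show ¬ k = n - a by omega)]
      obtain ⟨k', rfl⟩ : ∃ k', k = k' + 1 := ⟨k - 1, by omega⟩
      rw [hf_succ, gf_zero n a k' (by omega)]
      ring
  · -- k ≤ n - a
    have h3 : (n-a-k) % 3 = 0 ∨ (n-a-k) % 3 = 1 ∨ (n-a-k) % 3 = 2 := by omega
    rcases h3 with h3 | h3 | h3
    · rcases Nat.eq_zero_or_pos (n - a - k) with hz | hz
      · -- j = 0, k = n - a
        rw [cf_eq (n+1) a k (by omega), show n+1-a-k = 3*0+1 by omega, cj3_1,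
          cf_eq (n+1) a (k+1) (by omega), show n+1-a-(k+1) = 3*0 by omega, cj3_0,
          cf_zero (n+1) a (k+2) (by omega),
          gf_eq n a k hB, show n-a-k = 0 by omega, gj_zero,
          cf_eq n a k hB, show n-a-k = 3*0 by omega, cj3_0,
          if_pos (show k = n - a by omega),
          hf_eq n a k (by omega), show n-a+1-k = 3*0+1 by omega, gj3_1]
        simp only [pE, gE]
        obtain rfl : n = a + k := by omega
        rw [show 2*(a+k) - k = a + (a+k) by omega]
        ring
      · -- j = 3(i+1)
        obtain ⟨i, hi⟩ : ∃ i, n - a - k = 3*i+3 := ⟨(n-a-k)/3 - 1, by omega⟩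
        rw [cf_eq (n+1) a k (by omega), show n+1-a-k = 3*(i+1)+1 by omega, cj3_1,
          cf_eq (n+1) a (k+1) (by omega), show n+1-a-(k+1) = 3*(i+1) by omega, cj3_0,
          cf_eq (n+1) a (k+2) (by omega), show n+1-a-(k+2) = 3*i+2 by omega, cj3_2,
          gf_eq n a k hB, hi, gj3_3,
          cf_eq n a k hB, show n-a-k = 3*(i+1) by omega, cj3_0,
          if_neg (show ¬ k = n - a by omega),
          hf_eq n a k (by omega), show n-a+1-k = 3*(i+1)+1 by omega, gj3_1]
        simp only [pE, rE, gE]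
        obtain rfl : n = a+k+3*i+3 := by omega
        rw [show 2*(a+k+3*i+3) - k = a+a+k+6*i+6 by omega]
        ring
    · -- j = 3i+1
      obtain ⟨i, hi⟩ : ∃ i, n - a - k = 3*i+1 := ⟨(n-a-k)/3, by omega⟩
      rw [cf_eq (n+1) a k (by omega), show n+1-a-k = 3*i+2 by omega, cj3_2,
        cf_eq (n+1) a (k+1) (by omega), show n+1-a-(k+1) = 3*i+1 by omega, cj3_1,
        cf_eq (n+1) a (k+2) (by omega), show n+1-a-(k+2) = 3*i by omega, cj3_0,
        gf_eq n a k hB, hi, gj3_1,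
        cf_eq n a k hB, show n-a-k = 3*i+1 by omega, cj3_1,
        if_neg (show ¬ k = n - a by omega),
        hf_eq n a k (by omega), show n-a+1-k = 3*i+2 by omega, gj3_2]
      simp only [pE, rE, gE]
      obtain rfl : n = a+k+3*i+1 := by omega
      rw [show 2*(a+k+3*i+1) - k = a+a+k+6*i+2 by omega]
      ring
    · -- j = 3i+2
      obtain ⟨i, hi⟩ : ∃ i, n - a - k = 3*i+2 := ⟨(n-a-k)/3, by omega⟩
      rw [cf_eq (n+1) a k (by omega), show n+1-a-k = 3*(i+1) by omega, cj3_0,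
        cf_eq (n+1) a (k+1) (by omega), show n+1-a-(k+1) = 3*i+2 by omega, cj3_2,
        cf_eq (n+1) a (k+2) (by omega), show n+1-a-(k+2) = 3*i+1 by omega, cj3_1,
        gf_eq n a k hB, hi, gj3_2,
        cf_eq n a k hB, show n-a-k = 3*i+2 by omega, cj3_2,
        if_neg (show ¬ k = n - a by omega),
        hf_eq n a k (by omega), show n-a+1-k = 3*i+3 by omega, gj3_3]
      simp only [pE, rE, gE]
      obtain rfl : n = a+k+3*i+2 := by omega
      rw [show 2*(a+k+3*i+2) - k = a+a+k+6*i+4 by omega]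
      ring

lemma key (n a : ℕ) (ha : a ≤ n) :
    ∑ k ∈ Finset.range (n-a+1+1), cf (n+1) a k * gbinom (2*(n+1)) k
      = ∑ k ∈ Finset.range (n-a+1), cf n a k * gbinom (2*n) k
        + X^n * gbinom (2*n) (n-a) := by
  have h1 : ∑ k ∈ Finset.range (n-a+1+1), cf (n+1) a k * gbinom (2*(n+1)) k
      = ∑ k ∈ Finset.range (n-a+1+1),
          (cf (n+1) a k * X^k + cf (n+1) a (k+1)) * gbinom (2*n+1) k := by
    rw [show 2*(n+1) = (2*n+1)+1 by omega]
    exact pascal_sum (cf (n+1) a) (2*n+1) (n-a+1) (cf_zero _ _ _ (by omega))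
  have h2 : ∑ k ∈ Finset.range (n-a+1+1),
        (cf (n+1) a k * X^k + cf (n+1) a (k+1)) * gbinom (2*n+1) k
      = ∑ k ∈ Finset.range (n-a+1+1),
          ((cf (n+1) a k * X^k + cf (n+1) a (k+1)) * X^k
            + (cf (n+1) a (k+1) * X^(k+1) + cf (n+1) a (k+2))) * gbinom (2*n) k :=
    pascal_sum (fun k => cf (n+1) a k * X^k + cf (n+1) a (k+1)) (2*n) (n-a+1)
      (by show cf (n+1) a (n-a+1+1) * X^(n-a+1+1) + cf (n+1) a (n-a+1+1+1) = 0
          rw [cf_zero _ _ _ (by omega), cf_zero _ _ _ (by omega)]; ring)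
  rw [h1, h2]
  have h3 : ∀ k ∈ Finset.range (n-a+1+1),
      ((cf (n+1) a k * X^k + cf (n+1) a (k+1)) * X^k
        + (cf (n+1) a (k+1) * X^(k+1) + cf (n+1) a (k+2))) * gbinom (2*n) k
      = (cf n a k * gbinom (2*n) k + (if k = n-a then X^n * gbinom (2*n) k else 0)
          + hf n a k * gbinom (2*n) k)
        - gf n a k * ((1 - X^(2*n-k)) * gbinom (2*n) k) := by
    intro k _
    have hkt := key_term n a k ha
    have hite : (if k = n-a then X^n else 0) * gbinom (2*n) k
        = (if k = n-a then X^n * gbinom (2*n) k else 0) := by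
      split <;> ring
    linear_combination gbinom (2*n) k * hkt + hite
  rw [Finset.sum_congr rfl h3, Finset.sum_sub_distrib, Finset.sum_add_distrib,
    Finset.sum_add_distrib]
  have h4 : ∑ k ∈ Finset.range (n-a+1+1), cf n a k * gbinom (2*n) k
      = ∑ k ∈ Finset.range (n-a+1), cf n a k * gbinom (2*n) k := by
    rw [Finset.sum_range_succ, cf_zero n a (n-a+1) (by omega)]
    ring
  have h5 : ∑ k ∈ Finset.range (n-a+1+1), (if k = n-a then X^n * gbinom (2*n) k else 0)
      = X^n * gbinom (2*n) (n-a) := by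
    rw [Finset.sum_ite_eq' (Finset.range (n-a+1+1)) (n-a) (fun k => X^n * gbinom (2*n) k),
      if_pos (Finset.mem_range.mpr (by omega))]
  have h6 : ∑ k ∈ Finset.range (n-a+1+1), hf n a k * gbinom (2*n) k
      = ∑ k ∈ Finset.range (n-a+1+1), gf n a k * ((1 - X^(2*n-k)) * gbinom (2*n) k) := by
    rw [Finset.sum_range_succ' (fun k => hf n a k * gbinom (2*n) k) (n-a+1)]
    rw [Finset.sum_range_succ
      (fun k => gf n a k * ((1 - X^(2*n-k)) * gbinom (2*n) k)) (n-a+1),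
      gf_zero n a (n-a+1) (by omega)]
    have hterm : ∀ k ∈ Finset.range (n-a+1),
        hf n a (k+1) * gbinom (2*n) (k+1)
          = gf n a k * ((1 - X^(2*n-k)) * gbinom (2*n) k) := by
      intro k _
      rw [hf_succ]
      linear_combination gf n a k * gbinom_ratio (2*n) k
    rw [Finset.sum_congr rfl hterm, hf_zero]
    ring
  rw [h4, h5, h6]
  ring

theorem clean (n a : ℕ) (ha : a ≤ n) :
    ∑ k ∈ Finset.range n, X^k * gbinom (2*k) (k+a)
      = ∑ k ∈ Finset.range (n-a+1), cf n a k * gbinom (2*n) k := by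
  induction n, ha using Nat.le_induction with
  | base =>
    rw [show a - a + 1 = 0 + 1 by omega, Finset.sum_range_succ]
    rw [Finset.sum_range_zero, cf_eq a a 0 (by omega), show a - a - 0 = 3*0 by omega, cj3_0]
    have hz : ∀ k ∈ Finset.range a, X^k * gbinom (2*k) (k+a) = 0 := by
      intro k hk
      rw [Finset.mem_range] at hk
      rw [gbinom_eq_zero (show 2*k < k + a by omega)]
      ring
    rw [Finset.sum_congr rfl hz]
    simp
  | succ n hn ih =>
    rw [Finset.sum_range_succ, ih]
    have hsym : gbinom (2*n) (n+a) = gbinom (2*n) (n-a) := by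
      rw [gbinom_symm (2*n) (n+a) (by omega), show 2*n - (n+a) = n - a by omega]
    rw [hsym, show n+1-a+1 = n-a+1+1 by omega, key n a hn]

/-- For `n ≥ |d|`:
`∑_{k=0}^{n-1} q^k [2k, k+d]_q =
 ∑_{k=0}^{n-|d|} q^((2(n-k)² - (n-k)·χ(n-|d|-k) - 2d² - 1)/3) · χ(n-|d|-k) · [2n, k]_q`,
with `χ` the Legendre symbol mod 3. -/
theorem stmt_8 (n : ℕ) (d : ℤ) (hd : d.natAbs ≤ n) :
    (∑ k ∈ Finset.range n, Polynomial.X ^ k * gbinomZ (2 * k) (k + d)) =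
      ∑ k ∈ Finset.range (n - d.natAbs + 1),
        Polynomial.X ^
            (((2 * ((n : ℤ) - k) ^ 2 - ((n : ℤ) - k) * leg3 ((n : ℤ) - d.natAbs - k)
                - 2 * d ^ 2 - 1) / 3).toNat) *
          Polynomial.C (leg3 ((n : ℤ) - d.natAbs - k)) * gbinom (2 * n) k := by
  set a := d.natAbs with ha
  have hL : ∀ k ∈ Finset.range n, X ^ k * gbinomZ (2 * k) (k + d)
      = X ^ k * gbinom (2 * k) (k + a) := by
    intro k _
    rcases le_or_gt 0 ((k : ℤ) + d) with h | h
    · rw [gbinomZ, if_pos h]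
      rcases le_or_gt 0 d with h2 | h2
      · rw [show ((k : ℤ) + d).toNat = k + a by omega]
      · rw [show ((k : ℤ) + d).toNat = k - a by omega,
          gbinom_symm (2*k) (k - a) (by omega), show 2*k - (k - a) = k + a by omega]
    · rw [gbinomZ, if_neg (by omega), gbinom_eq_zero (show 2*k < k + a by omega)]
  rw [Finset.sum_congr rfl hL, clean n a hd]
  refine (Finset.sum_congr rfl ?_).symm
  intro k hk
  rw [Finset.mem_range] at hk
  have hkk : k ≤ n - a := by omega
  obtain ⟨j, hj⟩ : ∃ j : ℕ, n - a - k = j := ⟨n - a - k, rfl⟩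
  have harg : (n : ℤ) - a - k = (j : ℤ) := by omega
  rw [harg]
  have h3 : j % 3 = 0 ∨ j % 3 = 1 ∨ j % 3 = 2 := by omega
  rcases h3 with h3 | h3 | h3
  · have hl : leg3 (j : ℤ) = 0 := by
      simp [leg3, show ((j:ℕ):ℤ) % 3 = 0 by omega]
    rw [hl, cf_eq n a k hkk, hj, show j = 3*(j/3) by omega, cj3_0]
    simp
  · obtain ⟨i, hi⟩ : ∃ i, j = 3*i+1 := ⟨j/3, by omega⟩
    have hl : leg3 (j : ℤ) = 1 := by
      simp [leg3, show ¬ ((j:ℕ):ℤ) % 3 = 0 by omega, show ((j:ℕ):ℤ) % 3 = 1 by omega]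
    have hd2 : (d : ℤ)^2 = (a : ℤ)^2 := (Int.natAbs_sq d).symm
    have hnk : (n : ℤ) - k = (a : ℤ) + (3*(i:ℤ)+1) := by omega
    have hnum : 2 * ((n : ℤ) - k) ^ 2 - ((n : ℤ) - k) * 1 - 2 * d ^ 2 - 1
        = 3 * (pE a i : ℤ) := by
      rw [hnk, hd2]
      unfold pE
      push_cast
      ring
    rw [hl, hnum, show ((3 * (pE a i : ℤ)) / 3).toNat = pE a i by omega,
      cf_eq n a k hkk, hj, hi, cj3_1]
    simp
  · obtain ⟨i, hi⟩ : ∃ i, j = 3*i+2 := ⟨j/3, by omega⟩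
    have hl : leg3 (j : ℤ) = -1 := by
      simp [leg3, show ¬ ((j:ℕ):ℤ) % 3 = 0 by omega, show ¬ ((j:ℕ):ℤ) % 3 = 1 by omega]
    have hd2 : (d : ℤ)^2 = (a : ℤ)^2 := (Int.natAbs_sq d).symm
    have hnk : (n : ℤ) - k = (a : ℤ) + (3*(i:ℤ)+2) := by omega
    have hnum : 2 * ((n : ℤ) - k) ^ 2 - ((n : ℤ) - k) * (-1) - 2 * d ^ 2 - 1
        = 3 * (rE a i : ℤ) := by
      rw [hnk, hd2]
      unfold rE
      push_cast
      ring
    rw [hl, hnum, show ((3 * (rE a i : ℤ)) / 3).toNat = rE a i by omega,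
      cf_eq n a k hkk, hj, hi, cj3_2]
    simp
end

section
/- For n > 0, the congruence ∑_{k=0}^{n-1} (-1)^k q^{-binom(k,2)} C_k^q ≡ F_n^q(q) + F_{n+2}^q(1) - 2 holds modulo Φ_n(q), where the left side is interpreted after multiplying by a suitable power of q (i.e., q^{-binom(k,2)} is taken modulo Φ_n(q) using q^n ≡ 1). -/
open Polynomial Finset

/-- The q-Catalan number `C_k^q = [2k, k]_q - q·[2k, k+1]_q`. -/
noncomputable def qCatalan (k : ℕ) : Polynomial ℤ :=
  gbinom (2 * k) k - Polynomial.X * gbinom (2 * k) (k + 1)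

/-- The q-Fibonacci polynomial `F_n^q(t)` in `ℤ[q]`, at a value `t ∈ ℤ[q]`:
`F 0 = 0`, `F 1 = 1`, `F (n+2) = F (n+1) + q^n · t · F n`. -/
noncomputable def qFibAt (t : Polynomial ℤ) : ℕ → Polynomial ℤ
  | 0 => 0
  | 1 => 1
  | n + 2 => qFibAt t (n + 1) + Polynomial.X ^ n * t * qFibAt t n

/-!
Let `ζ` be a primitive `n`-th root of unity, `n ≥ 2`. Since `Φ_n` is the minimal polynomial of
`ζ`, it suffices to prove the identity at `q = ζ`. Clearing denominators,
`[a+k, k]_q · (q-1)⋯(q^k-1) = (q^(a+1)-1)⋯(q^(a+k)-1)`, and at `ζ` the factor `ζ^(a+j+1) - 1`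
is `-ζ^(a+j+1)` times `ζ^(n-a-j-1) - 1`. This gives the reflection
`[a+k, k]_ζ = (-1)^k ζ^(ka + C(k+1,2)) [n-1-a, k]_ζ`, which turns the `k`-th summand into
`ζ^(k²+k) [n-1-k, k]_ζ + ζ^((k+1)²) [n-k, k+1]_ζ`; for the last one, `k = n-1`, the second
part is `-1` instead, by symmetry, `[n+k, k]_ζ = 1` and `ζ^C(n,2) = (-1)^(n-1)`. These are the
terms of the expansion `F_{m+1}^q(t) = ∑_k q^(k²) t^k [m-k, k]_q` at `t = q` and `t = 1`.
-/
lemma gbinom_zero_right (m : ℕ) : gbinom m 0 = 1 := by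
  cases m <;> rfl

lemma gbinom_succ_succ (m k : ℕ) :
    gbinom (m + 1) (k + 1) = gbinom m k + X ^ (k + 1) * gbinom m (k + 1) := rfl

lemma gbinom_eq_zero_of_lt {m k : ℕ} (h : m < k) : gbinom m k = 0 := by
  induction m generalizing k with
  | zero => obtain ⟨k, rfl⟩ := Nat.exists_eq_add_one_of_ne_zero h.ne'; rfl
  | succ m ih =>
    obtain ⟨k, rfl⟩ := Nat.exists_eq_add_one_of_ne_zero (by omega : k ≠ 0)
    rw [gbinom_succ_succ, ih (by omega), ih (by omega), mul_zero, add_zero]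

lemma gbinom_self_s16 (m : ℕ) : gbinom m m = 1 := by
  induction m with
  | zero => rfl
  | succ m ih => rw [gbinom_succ_succ, ih, gbinom_eq_zero_of_lt (by omega), mul_zero, add_zero]

/-- `(q - 1) ^ m · [m]_q!`, the q-factorial with its denominators cleared. -/
noncomputable def qFact (m : ℕ) : ℤ[X] := ∏ j ∈ range m, (X ^ (j + 1) - 1)

lemma qFact_succ (m : ℕ) : qFact (m + 1) = qFact m * (X ^ (m + 1) - 1) :=
  prod_range_succ _ _

lemma qFact_ne_zero (m : ℕ) : qFact m ≠ 0 :=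
  prod_ne_zero_iff.mpr fun j _ h => by simpa using congrArg (eval 0) h

lemma gbinom_mul_qFact_mul_qFact (k a : ℕ) :
    gbinom (k + a) k * qFact k * qFact a = qFact (k + a) := by
  induction k generalizing a with
  | zero => simp [gbinom_zero_right, qFact]
  | succ k ihk =>
    induction a with
    | zero => simp [gbinom_self_s16, qFact]
    | succ a iha =>
      have h1 := ihk (a + 1)
      rw [← add_assoc] at h1
      rw [show k + 1 + (a + 1) = k + a + 1 + 1 by ring, gbinom_succ_succ, qFact_succ, qFact_succ,
        qFact_succ (k + a + 1)]
      rw [show k + 1 + a = k + a + 1 by ring, qFact_succ] at iha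
      rw [qFact_succ] at h1
      linear_combination (X ^ (k + 1) - 1 : ℤ[X]) * h1 +
        (X ^ (k + 1) * (X ^ (a + 1) - 1) : ℤ[X]) * iha

lemma gbinom_mul_qFact (a k : ℕ) :
    gbinom (a + k) k * qFact k = ∏ j ∈ range k, (X ^ (a + j + 1) - 1) := by
  apply mul_left_cancel₀ (qFact_ne_zero a)
  rw [← mul_assoc, mul_comm (qFact a), mul_right_comm, add_comm a k, gbinom_mul_qFact_mul_qFact,
    add_comm k a, qFact, qFact, prod_range_add]

lemma gbinom_add_symm (k a : ℕ) : gbinom (k + a) a = gbinom (k + a) k := by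
  have h := gbinom_mul_qFact_mul_qFact a k
  rw [add_comm a k, ← gbinom_mul_qFact_mul_qFact k a, mul_right_comm] at h
  exact mul_right_cancel₀ (qFact_ne_zero k) (mul_right_cancel₀ (qFact_ne_zero a) h)

lemma gbinom_succ_succ' (m k : ℕ) :
    gbinom (m + 1) (k + 1) = gbinom m (k + 1) + X ^ (m - k) * gbinom m k := by
  rcases lt_or_ge m k with hmk | hkm
  · rw [gbinom_eq_zero_of_lt (Nat.succ_lt_succ hmk), gbinom_eq_zero_of_lt hmk,
      gbinom_eq_zero_of_lt (hmk.trans k.lt_succ_self), mul_zero, add_zero]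
  obtain ⟨b, rfl⟩ := Nat.exists_eq_add_of_le hkm
  rw [Nat.add_sub_cancel_left]
  cases b with
  | zero => rw [add_zero, gbinom_self_s16, gbinom_self_s16, gbinom_eq_zero_of_lt k.lt_succ_self]; ring
  | succ b =>
    have h := gbinom_add_symm (k + 1) (b + 1)
    rw [show k + 1 + (b + 1) = k + 1 + b + 1 by ring, gbinom_succ_succ, gbinom_add_symm,
      show k + 1 + b = k + (b + 1) by ring, gbinom_add_symm] at h
    exact h.symm

noncomputable def qFibSum (t : ℤ[X]) (m : ℕ) : ℤ[X] :=
  ∑ k ∈ range (m + 1), X ^ (k * k) * t ^ k * gbinom (m - k) k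

lemma qFibSum_eq_sum_range (t : ℤ[X]) {m M : ℕ} (h : m < 2 * M) :
    qFibSum t m = ∑ k ∈ range M, X ^ (k * k) * t ^ k * gbinom (m - k) k := by
  rcases le_total (m + 1) M with hM | hM
  · exact sum_subset (range_subset_range.2 hM) fun k _ hk => by
      rw [gbinom_eq_zero_of_lt (by rw [mem_range] at hk; omega), mul_zero]
  · exact (sum_subset (range_subset_range.2 hM) fun k _ hk => by
      rw [gbinom_eq_zero_of_lt (by rw [mem_range] at hk; omega), mul_zero]).symm

lemma qFibSum_add_two (t : ℤ[X]) (m : ℕ) :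
    qFibSum t (m + 2) = qFibSum t (m + 1) + X ^ (m + 1) * t * qFibSum t m := by
  rw [qFibSum, qFibSum_eq_sum_range t (show m + 1 < 2 * (m + 3) by omega),
    qFibSum_eq_sum_range t (show m < 2 * (m + 2) by omega),
    sum_range_succ' (fun k => X ^ (k * k) * t ^ k * gbinom (m + 2 - k) k),
    sum_range_succ' (fun k => X ^ (k * k) * t ^ k * gbinom (m + 1 - k) k),
    mul_sum, add_right_comm, ← sum_add_distrib]
  simp only [gbinom_zero_right, mul_zero, pow_zero, mul_one]
  congr 1
  refine sum_congr rfl fun k _ => ?_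
  rcases lt_or_ge m (2 * k) with hm | hm
  · rw [gbinom_eq_zero_of_lt (by omega : m + 2 - (k + 1) < k + 1),
      gbinom_eq_zero_of_lt (by omega : m + 1 - (k + 1) < k + 1),
      gbinom_eq_zero_of_lt (by omega : m - k < k)]
    ring
  · obtain ⟨d, rfl⟩ := Nat.exists_eq_add_of_le hm
    rw [show 2 * k + d + 2 - (k + 1) = k + d + 1 by omega,
      show 2 * k + d + 1 - (k + 1) = k + d by omega, show 2 * k + d - k = k + d by omega,
      gbinom_succ_succ', show k + d - k = d by omega]
    ring

lemma qFibAt_succ (t : ℤ[X]) (m : ℕ) : qFibAt t (m + 1) = qFibSum t m := by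
  induction m using Nat.twoStepInduction with
  | zero => simp [qFibAt, qFibSum, gbinom_zero_right]
  | one => simp [qFibAt, qFibSum, sum_range_succ, gbinom_zero_right, gbinom_eq_zero_of_lt]
  | more m ih₀ ih₁ =>
    rw [qFibSum_add_two, ← ih₀, ← ih₁]
    rfl

lemma qFibAt_X_succ (m : ℕ) :
    qFibAt X (m + 1) = ∑ k ∈ range (m + 1), X ^ (k * k + k) * gbinom (m - k) k := by
  rw [qFibAt_succ, qFibSum]
  exact sum_congr rfl fun k _ => by ring

lemma qFibAt_one_add_four (m : ℕ) :
    qFibAt 1 (m + 4) =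
      1 + ∑ k ∈ range (m + 1), X ^ ((k + 1) * (k + 1)) * gbinom (m + 2 - k) (k + 1) := by
  rw [qFibAt_succ, qFibSum_eq_sum_range 1 (show m + 3 < 2 * (m + 2) by omega), sum_range_succ',
    add_comm]
  simp [gbinom_zero_right]

lemma choose_two_succ (k : ℕ) : (k + 1).choose 2 = k.choose 2 + k := by
  rw [Nat.choose_succ_succ', Nat.choose_one_right, add_comm]

lemma sum_range_add_add_one (a k : ℕ) :
    ∑ j ∈ range k, (a + j + 1) = k * a + (k + 1).choose 2 := by
  induction k with
  | zero => simp
  | succ k ih => rw [sum_range_succ, ih, choose_two_succ (k + 1)]; ring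

section RootOfUnity

variable {R : Type*} [CommRing R] {n : ℕ} {ζ : R}

lemma prod_pow_sub_one_reflect (h : ζ ^ n = 1) {a b k : ℕ} (hn : a + b + k + 1 = n) :
    ∏ j ∈ range k, (ζ ^ (a + j + 1) - 1) =
      (-1) ^ k * ζ ^ (k * a + (k + 1).choose 2) * ∏ j ∈ range k, (ζ ^ (b + j + 1) - 1) := by
  calc ∏ j ∈ range k, (ζ ^ (a + j + 1) - 1)
      = ∏ j ∈ range k, ((-1) * ζ ^ (a + j + 1) * (ζ ^ (b + (k - 1 - j) + 1) - 1)) := by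
        refine prod_congr rfl fun j hj => ?_
        have hn' : ζ ^ (a + j + 1) * ζ ^ (b + (k - 1 - j) + 1) = 1 := by
          rw [mem_range] at hj
          rw [← pow_add, show a + j + 1 + (b + (k - 1 - j) + 1) = n by omega, h]
        linear_combination hn'
    _ = _ := by
        rw [prod_mul_distrib, prod_mul_distrib, prod_const, card_range, prod_pow_eq_pow_sum,
          sum_range_add_add_one, prod_range_reflect (fun j => ζ ^ (b + j + 1) - 1)]

lemma aeval_gbinom_mul_aeval_qFact (ζ : R) (a k : ℕ) :
    aeval ζ (gbinom (a + k) k) * aeval ζ (qFact k) =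
      ∏ j ∈ range k, (ζ ^ (a + j + 1) - 1) := by
  simpa using congrArg (aeval ζ) (gbinom_mul_qFact a k)

lemma pow_sub_one_mul_mul_pow (h : ζ ^ n = 1) (hn : 0 < n) (c : ℕ) :
    ζ ^ ((n - 1) * c) * ζ ^ c = 1 := by
  rw [← pow_add, ← add_one_mul, Nat.sub_add_cancel (show 1 ≤ n from hn), pow_mul, h, one_pow]

variable [IsDomain R]

lemma aeval_qFact_ne_zero (hζ : IsPrimitiveRoot ζ n) {k : ℕ} (hk : k < n) :
    aeval ζ (qFact k) ≠ 0 := by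
  simp only [qFact, map_prod, map_sub, map_pow, aeval_X, map_one]
  exact prod_ne_zero_iff.2 fun j hj =>
    sub_ne_zero.2 (hζ.pow_ne_one_of_pos_of_lt j.succ_ne_zero (by rw [mem_range] at hj; omega))

lemma aeval_gbinom_reflect (hζ : IsPrimitiveRoot ζ n) {a k : ℕ} (ha : a < n) (hk : k < n) :
    aeval ζ (gbinom (a + k) k) =
      (-1) ^ k * ζ ^ (k * a + (k + 1).choose 2) * aeval ζ (gbinom (n - 1 - a) k) := by
  have hP := aeval_qFact_ne_zero hζ hk
  rcases lt_or_ge (a + k) n with h | h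
  · obtain ⟨b, hb⟩ : ∃ b, a + b + k + 1 = n := ⟨n - 1 - a - k, by omega⟩
    apply mul_right_cancel₀ hP
    rw [mul_assoc _ (aeval ζ _), show n - 1 - a = b + k by omega, aeval_gbinom_mul_aeval_qFact,
      aeval_gbinom_mul_aeval_qFact, prod_pow_sub_one_reflect hζ.pow_eq_one hb]
  · rw [gbinom_eq_zero_of_lt (show n - 1 - a < k by omega), map_zero, mul_zero]
    refine (mul_eq_zero.1 ?_).resolve_right hP
    rw [aeval_gbinom_mul_aeval_qFact]
    refine prod_eq_zero (mem_range.2 (show n - 1 - a < k by omega)) ?_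
    rw [show a + (n - 1 - a) + 1 = n by omega, hζ.pow_eq_one, sub_self]

lemma aeval_gbinom_add_self (hζ : IsPrimitiveRoot ζ n) {k : ℕ} (hk : k < n) :
    aeval ζ (gbinom (n + k) k) = 1 := by
  apply mul_right_cancel₀ (aeval_qFact_ne_zero hζ hk)
  rw [aeval_gbinom_mul_aeval_qFact, one_mul, qFact, map_prod]
  exact prod_congr rfl fun j _ => by simp [add_assoc, pow_add, hζ.pow_eq_one]

lemma IsPrimitiveRoot.pow_choose_two (hζ : IsPrimitiveRoot ζ n) :
    ζ ^ n.choose 2 = (-1) ^ (n - 1) := by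
  rcases Nat.even_or_odd' n with ⟨m, rfl | rfl⟩
  · rcases m.eq_zero_or_pos with rfl | hm
    · simp
    have hζm : ζ ^ m = -1 := IsPrimitiveRoot.eq_neg_one_of_two_right <| by
      simpa [hm.ne'] using hζ.pow_of_dvd hm.ne' ⟨2, by ring⟩
    rw [Nat.choose_two_right, mul_assoc, Nat.mul_div_cancel_left _ two_pos, pow_mul, hζm]
  · rw [Nat.choose_two_right, Nat.add_sub_cancel, mul_left_comm, Nat.mul_div_cancel_left _ two_pos,
      pow_mul, hζ.pow_eq_one, one_pow, pow_mul]
    simp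

lemma aeval_qCatalan_term_fst (hζ : IsPrimitiveRoot ζ n) {k : ℕ} (hk : k < n) :
    (-1) ^ k * ζ ^ ((n - 1) * k.choose 2) * aeval ζ (gbinom (2 * k) k) =
      ζ ^ (k * k + k) * aeval ζ (gbinom (n - 1 - k) k) := by
  have hc := pow_sub_one_mul_mul_pow hζ.pow_eq_one (by omega) (k.choose 2)
  have hs : ((-1 : R) ^ k) * (-1) ^ k = 1 := by rw [← mul_pow]; simp
  rw [two_mul, aeval_gbinom_reflect hζ hk hk, choose_two_succ]
  linear_combination (ζ ^ (k * k + k) * aeval ζ (gbinom (n - 1 - k) k)) *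
    ((-1) ^ k * (-1) ^ k * hc + hs)

lemma aeval_qCatalan_term_snd (hζ : IsPrimitiveRoot ζ n) {k : ℕ} (hk : k + 2 ≤ n) :
    (-1) ^ k * ζ ^ ((n - 1) * k.choose 2) * (ζ * aeval ζ (gbinom (2 * k) (k + 1))) =
      -(ζ ^ ((k + 1) * (k + 1)) * aeval ζ (gbinom (n - k) (k + 1))) := by
  cases k with
  | zero =>
    have h := aeval_gbinom_reflect hζ (a := n - 1) (k := 1) (by omega) (by omega)
    rw [show n - 1 + 1 = n by omega, show n - 1 - (n - 1) = 0 by omega,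
      gbinom_eq_zero_of_lt zero_lt_one] at h
    simp [h, gbinom_eq_zero_of_lt]
  | succ j =>
    have hc := pow_sub_one_mul_mul_pow hζ.pow_eq_one (by omega) ((j + 1).choose 2)
    have hs : ((-1 : R) ^ (j + 1)) * (-1) ^ (j + 2) = -1 := by
      rw [← pow_add, Odd.neg_one_pow ⟨j + 1, by ring⟩]
    rw [show 2 * (j + 1) = j + (j + 2) by ring, aeval_gbinom_reflect hζ (by omega) (by omega),
      show n - 1 - j = n - (j + 1) by omega, choose_two_succ (j + 2), choose_two_succ (j + 1)]
    linear_combination (ζ ^ ((j + 2) * (j + 2)) * aeval ζ (gbinom (n - (j + 1)) (j + 2))) *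
      ((-1) ^ (j + 1) * (-1) ^ (j + 2) * hc + hs)

lemma aeval_qCatalan_term_snd_last {m : ℕ} (hζ : IsPrimitiveRoot ζ (m + 2)) :
    (-1) ^ (m + 1) * ζ ^ ((m + 1) * (m + 1).choose 2) *
      (ζ * aeval ζ (gbinom (2 * (m + 1)) (m + 1 + 1))) = 1 := by
  rw [show 2 * (m + 1) = m + (m + 2) by ring, gbinom_add_symm, add_comm m (m + 2),
    aeval_gbinom_add_self hζ (by omega), mul_one]
  have hc : ζ ^ ((m + 1) * (m + 1).choose 2) * ζ ^ (m + 1).choose 2 = 1 :=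
    pow_sub_one_mul_mul_pow hζ.pow_eq_one (by omega) _
  have hch : ζ ^ (m + 1).choose 2 * ζ ^ (m + 1) = (-1) ^ (m + 1) := by
    have h := hζ.pow_choose_two
    rwa [choose_two_succ, pow_add] at h
  have hz : ζ ^ (m + 1) * ζ = 1 := by
    rw [← pow_succ]
    exact hζ.pow_eq_one
  linear_combination (-(ζ ^ ((m + 1) * (m + 1).choose 2) * ζ)) * hch + (ζ ^ (m + 1) * ζ) * hc +
    hz

lemma aeval_sum_qCatalan {m : ℕ} (hζ : IsPrimitiveRoot ζ (m + 2)) :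
    aeval ζ (∑ k ∈ range (m + 2),
        (-1 : ℤ[X]) ^ k * X ^ ((m + 1) * k.choose 2) * qCatalan k) =
      aeval ζ (qFibAt X (m + 2) + qFibAt 1 (m + 4) - 2) := by
  have hleft : ∀ k ∈ range (m + 2), (-1) ^ k * ζ ^ ((m + 1) * k.choose 2) *
      aeval ζ (gbinom (2 * k) k) = ζ ^ (k * k + k) * aeval ζ (gbinom (m + 1 - k) k) :=
    fun k hk => aeval_qCatalan_term_fst hζ (mem_range.1 hk)
  have hright : ∀ k ∈ range (m + 1), (-1) ^ k * ζ ^ ((m + 1) * k.choose 2) *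
      (ζ * aeval ζ (gbinom (2 * k) (k + 1))) =
        -(ζ ^ ((k + 1) * (k + 1)) * aeval ζ (gbinom (m + 2 - k) (k + 1))) :=
    fun k hk => aeval_qCatalan_term_snd hζ (by rw [mem_range] at hk; omega)
  have hsum_right : ∑ k ∈ range (m + 2), (-1) ^ k * ζ ^ ((m + 1) * k.choose 2) *
      (ζ * aeval ζ (gbinom (2 * k) (k + 1))) =
        1 - ∑ k ∈ range (m + 1),
          ζ ^ ((k + 1) * (k + 1)) * aeval ζ (gbinom (m + 2 - k) (k + 1)) := by
    rw [sum_range_succ, aeval_qCatalan_term_snd_last hζ, sum_congr rfl hright, sum_neg_distrib]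
    ring
  simp only [qCatalan, map_sum, map_mul, map_sub, map_pow, map_neg, map_one, aeval_X, mul_sub,
    sum_sub_distrib]
  rw [sum_congr rfl hleft, hsum_right, qFibAt_X_succ, qFibAt_one_add_four]
  simp only [map_add, map_sum, map_mul, map_pow, aeval_X, map_one, map_ofNat]
  ring

end RootOfUnity

/-- For `n > 0`:
`∑_{k=0}^{n-1} (-1)^k q^(-C(k,2)) C_k^q ≡ F_n^q(q) + F_{n+2}^q(1) - 2 (mod Φ_n(q))`,
where the negative power `q^(-C(k,2))` is interpreted as `q^((n-1)·C(k,2))`,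
using `q^n ≡ 1 (mod Φ_n(q))`. -/
theorem stmt_16 (n : ℕ) (hn : 0 < n) :
    Polynomial.cyclotomic n ℤ ∣
      ((∑ k ∈ Finset.range n,
          (-1 : Polynomial ℤ) ^ k * Polynomial.X ^ ((n - 1) * k.choose 2) * qCatalan k) -
        (qFibAt Polynomial.X n + qFibAt 1 (n + 2) - 2)) := by
  rcases Nat.lt_or_ge n 2 with hn2 | hn2
  · obtain rfl : n = 1 := by omega
    rw [cyclotomic_one]
    refine ⟨-1, ?_⟩
    simp only [range_one, sum_singleton, tsub_self, zero_mul, pow_zero, mul_one, qCatalan, gbinom,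
      mul_zero, sub_zero, qFibAt, add_zero, pow_one]
    ring
  obtain ⟨m, rfl⟩ := Nat.exists_eq_add_of_le' hn2
  have hζ := Complex.isPrimitiveRoot_exp (m + 2) (by omega)
  rw [cyclotomic_eq_minpoly hζ hn]
  refine minpoly.isIntegrallyClosed_dvd (hζ.isIntegral hn) ?_
  rw [map_sub, sub_eq_zero]
  exact aeval_sum_qCatalan hζ
end
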